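/- The logic N4CK has the Disjunction Property: for all formulas φ, ψ of the conditional language, φ ∨ ψ is valid in all Nelsonian conditional models if and only if at least one of φ, ψ is valid in all Nelsonian conditional models. -/

import Mathlib

inductive CForm : Type where
  | var : Nat → CForm
  | and : CForm → CForm → CForm
  | or  : CForm → CForm → CForm
  | neg : CForm → CForm
  | imp : CForm → CForm → CForm
  | cond : CForm → CForm → CForm

/-- A Nelsonian conditional model: a Nelsonian model together with a
bi-set-indexed accessibility relation satisfying (c1) and (c2). -/
structure CNModel where
  W : Type
  le : W → W → Prop
  refl : ∀ w, le w w
  trans : ∀ {a b c}, le a b → le b c → le a c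
  Vp : Nat → W → Prop
  Vn : Nat → W → Prop
  monoP : ∀ (n : Nat) {w v}, le w v → Vp n w → Vp n v
  monoN : ∀ (n : Nat) {w v}, le w v → Vn n w → Vn n v
  R : W → Set W × Set W → W → Prop
  c1 : ∀ (XY : Set W × Set W) {w w' v}, le w w' → R w XY v → ∃ v', R w' XY v' ∧ le v v'
  c2 : ∀ (XY : Set W × Set W) {w v v'}, R w XY v → le v v' → ∃ w', le w w' ∧ R w' XY v'

/-- Verification (`true`) and falsification (`false`) in a Nelsonian conditional model. -/
def CNModel.sat (M : CNModel) : CForm → Bool → M.W → Prop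
  | .var n, true, w => M.Vp n w
  | .var n, false, w => M.Vn n w
  | .and φ ψ, true, w => M.sat φ true w ∧ M.sat ψ true w
  | .and φ ψ, false, w => M.sat φ false w ∨ M.sat ψ false w
  | .or φ ψ, true, w => M.sat φ true w ∨ M.sat ψ true w
  | .or φ ψ, false, w => M.sat φ false w ∧ M.sat ψ false w
  | .neg φ, b, w => M.sat φ (!b) w
  | .imp φ ψ, true, w => ∀ v, M.le w v → M.sat φ true v → M.sat ψ true v
  | .imp φ ψ, false, w => M.sat φ true w ∧ M.sat ψ false w
  | .cond φ ψ, true, w =>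
      ∀ v u, M.le w v → M.R v ({x | M.sat φ true x}, {x | M.sat φ false x}) u →
        M.sat ψ true u
  | .cond φ ψ, false, w =>
      ∃ u, M.R w ({x | M.sat φ true x}, {x | M.sat φ false x}) u ∧ M.sat ψ false u

/-- N4CK-validity: verified at every world of every Nelsonian conditional model. -/
def CValid (φ : CForm) : Prop := ∀ (M : CNModel) (w : M.W), M.sat φ true w

/-!
Suppose φ fails at a world of `M₁` and ψ at a world of `M₂`. Put the two models side by side
under a fresh root `none`. Each summand is closed under `le` and `R`, so it is a generated
submodel and its worlds verify and falsify exactly what they did before. Verification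
persists upwards, so if the root verified φ ∨ ψ, one of the two worlds would verify φ or ψ.
-/

theorem CNModel.sat_mono (M : CNModel) (χ : CForm) (b : Bool) {w v : M.W} (h : M.le w v) :
    M.sat χ b w → M.sat χ b v := by
  induction χ generalizing b w v with
  | var n =>
    cases b
    · exact M.monoN n h
    · exact M.monoP n h
  | and φ ψ ihφ ihψ =>
    cases b
    · exact Or.imp (ihφ false h) (ihψ false h)
    · exact And.imp (ihφ true h) (ihψ true h)
  | or φ ψ ihφ ihψ =>
    cases b
    · exact And.imp (ihφ false h) (ihψ false h)
    · exact Or.imp (ihφ true h) (ihψ true h)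
  | neg φ ih => exact ih (!b) h
  | imp φ ψ ihφ ihψ =>
    cases b
    · exact And.imp (ihφ true h) (ihψ false h)
    · exact fun hw u hvu => hw u (M.trans h hvu)
  | cond φ ψ _ ihψ =>
    cases b
    · rintro ⟨u, hR, hu⟩
      obtain ⟨u', hR', huu'⟩ := M.c1 _ h hR
      exact ⟨u', hR', ihψ false huu' hu⟩
    · exact fun hw v' u hvv' => hw v' u (M.trans h hvv')

structure CNModel.GeneratedEmbedding (M N : CNModel) where
  toFun : M.W → N.W
  le_iff : ∀ a b, N.le (toFun a) (toFun b) ↔ M.le a b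
  exists_eq_of_le : ∀ a y, N.le (toFun a) y → ∃ b, toFun b = y
  Vp_iff : ∀ n a, N.Vp n (toFun a) ↔ M.Vp n a
  Vn_iff : ∀ n a, N.Vn n (toFun a) ↔ M.Vn n a
  exists_eq_of_R : ∀ a XY y, N.R (toFun a) XY y → ∃ b, toFun b = y
  R_iff : ∀ a XY b,
    N.R (toFun a) XY (toFun b) ↔ M.R a (toFun ⁻¹' XY.1, toFun ⁻¹' XY.2) b

namespace CNModel.GeneratedEmbedding

variable {M N : CNModel} (e : M.GeneratedEmbedding N)

theorem forall_le_iff (a : M.W) (P : N.W → Prop) :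
    (∀ y, N.le (e.toFun a) y → P y) ↔ ∀ b, M.le a b → P (e.toFun b) := by
  refine ⟨fun h b hab => h _ ((e.le_iff a b).2 hab), fun h y hy => ?_⟩
  obtain ⟨b, rfl⟩ := e.exists_eq_of_le a y hy
  exact h b ((e.le_iff a b).1 hy)

theorem forall_R_iff (a : M.W) (XY : Set N.W × Set N.W) (P : N.W → Prop) :
    (∀ y, N.R (e.toFun a) XY y → P y) ↔
      ∀ b, M.R a (e.toFun ⁻¹' XY.1, e.toFun ⁻¹' XY.2) b → P (e.toFun b) := by
  refine ⟨fun h b hab => h _ ((e.R_iff a XY b).2 hab), fun h y hy => ?_⟩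
  obtain ⟨b, rfl⟩ := e.exists_eq_of_R a XY y hy
  exact h b ((e.R_iff a XY b).1 hy)

theorem exists_R_iff (a : M.W) (XY : Set N.W × Set N.W) (P : N.W → Prop) :
    (∃ y, N.R (e.toFun a) XY y ∧ P y) ↔
      ∃ b, M.R a (e.toFun ⁻¹' XY.1, e.toFun ⁻¹' XY.2) b ∧ P (e.toFun b) := by
  refine ⟨fun ⟨y, hy, hP⟩ => ?_, fun ⟨b, hb, hP⟩ => ⟨_, (e.R_iff a XY b).2 hb, hP⟩⟩
  obtain ⟨b, rfl⟩ := e.exists_eq_of_R a XY y hy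
  exact ⟨b, (e.R_iff a XY b).1 hy, hP⟩

theorem sat_iff (χ : CForm) (b : Bool) (a : M.W) :
    N.sat χ b (e.toFun a) ↔ M.sat χ b a := by
  induction χ generalizing b a with
  | var n =>
    cases b
    · exact e.Vn_iff n a
    · exact e.Vp_iff n a
  | and φ ψ ihφ ihψ => cases b <;> simp only [CNModel.sat, ihφ, ihψ]
  | or φ ψ ihφ ihψ => cases b <;> simp only [CNModel.sat, ihφ, ihψ]
  | neg φ ih => exact ih (!b) a
  | imp φ ψ ihφ ihψ =>
    cases b
    · simp only [CNModel.sat, ihφ, ihψ]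
    · simp only [CNModel.sat, e.forall_le_iff, ihφ, ihψ]
  | cond φ ψ ihφ ihψ =>
    have hφ : (e.toFun ⁻¹' {x | N.sat φ true x}, e.toFun ⁻¹' {x | N.sat φ false x}) =
        ({x | M.sat φ true x}, {x | M.sat φ false x}) := by
      ext x <;> exact ihφ _ x
    cases b
    · simp only [CNModel.sat, e.exists_R_iff, hφ, ihψ]
    · simp only [CNModel.sat, ← imp_forall_iff, e.forall_le_iff, e.forall_R_iff, hφ, ihψ]

end CNModel.GeneratedEmbedding

def CNModel.rootedSum (M₁ M₂ : CNModel) : CNModel where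
  W := Option (M₁.W ⊕ M₂.W)
  le
    | none, _ => True
    | some (.inl a), some (.inl b) => M₁.le a b
    | some (.inr a), some (.inr b) => M₂.le a b
    | _, _ => False
  refl
    | none => trivial
    | some (.inl a) => M₁.refl a
    | some (.inr a) => M₂.refl a
  trans {a b c} hab hbc := by
    rcases a with _ | a | a <;> rcases b with _ | b | b <;> rcases c with _ | c | c <;>
      first
        | trivial
        | exact hab.elim
        | exact hbc.elim
        | exact M₁.trans hab hbc
        | exact M₂.trans hab hbc
  Vp n
    | none => False
    | some (.inl a) => M₁.Vp n a
    | some (.inr a) => M₂.Vp n a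
  Vn n
    | none => False
    | some (.inl a) => M₁.Vn n a
    | some (.inr a) => M₂.Vn n a
  monoP n {w v} hwv h := by
    rcases w with _ | a | a <;> rcases v with _ | b | b <;>
      first | exact h.elim | exact hwv.elim | exact M₁.monoP n hwv h | exact M₂.monoP n hwv h
  monoN n {w v} hwv h := by
    rcases w with _ | a | a <;> rcases v with _ | b | b <;>
      first | exact h.elim | exact hwv.elim | exact M₁.monoN n hwv h | exact M₂.monoN n hwv h
  R
    | some (.inl a), XY, some (.inl b) =>
        M₁.R a ((some ∘ Sum.inl) ⁻¹' XY.1, (some ∘ Sum.inl) ⁻¹' XY.2) b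
    | some (.inr a), XY, some (.inr b) =>
        M₂.R a ((some ∘ Sum.inr) ⁻¹' XY.1, (some ∘ Sum.inr) ⁻¹' XY.2) b
    | _, _, _ => False
  c1 XY {w w' v} hww' hR := by
    rcases w with _ | a | a <;> rcases w' with _ | a' | a' <;> rcases v with _ | b | b <;>
      first
        | exact hR.elim
        | exact hww'.elim
        | (obtain ⟨b', hR', hbb'⟩ := M₁.c1 _ hww' hR; exact ⟨some (.inl b'), hR', hbb'⟩)
        | (obtain ⟨b', hR', hbb'⟩ := M₂.c1 _ hww' hR; exact ⟨some (.inr b'), hR', hbb'⟩)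
  c2 XY {w v v'} hR hvv' := by
    rcases w with _ | a | a <;> rcases v with _ | b | b <;> rcases v' with _ | b' | b' <;>
      first
        | exact hR.elim
        | exact hvv'.elim
        | (obtain ⟨a', haa', hR'⟩ := M₁.c2 _ hR hvv'; exact ⟨some (.inl a'), haa', hR'⟩)
        | (obtain ⟨a', haa', hR'⟩ := M₂.c2 _ hR hvv'; exact ⟨some (.inr a'), haa', hR'⟩)

namespace CNModel.rootedSum

variable (M₁ M₂ : CNModel)

def inl : M₁.GeneratedEmbedding (M₁.rootedSum M₂) where
  toFun := some ∘ Sum.inl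
  le_iff _ _ := Iff.rfl
  exists_eq_of_le
    | _, some (.inl b), _ => ⟨b, rfl⟩
    | _, some (.inr _), h | _, none, h => h.elim
  Vp_iff _ _ := Iff.rfl
  Vn_iff _ _ := Iff.rfl
  exists_eq_of_R
    | _, _, some (.inl b), _ => ⟨b, rfl⟩
    | _, _, some (.inr _), h | _, _, none, h => h.elim
  R_iff _ _ _ := Iff.rfl

def inr : M₂.GeneratedEmbedding (M₁.rootedSum M₂) where
  toFun := some ∘ Sum.inr
  le_iff _ _ := Iff.rfl
  exists_eq_of_le
    | _, some (.inr b), _ => ⟨b, rfl⟩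
    | _, some (.inl _), h | _, none, h => h.elim
  Vp_iff _ _ := Iff.rfl
  Vn_iff _ _ := Iff.rfl
  exists_eq_of_R
    | _, _, some (.inr b), _ => ⟨b, rfl⟩
    | _, _, some (.inl _), h | _, _, none, h => h.elim
  R_iff _ _ _ := Iff.rfl

theorem root_le (w : (M₁.rootedSum M₂).W) : (M₁.rootedSum M₂).le none w := trivial

end CNModel.rootedSum

theorem n4ck_dp (φ ψ : CForm) :
    CValid (.or φ ψ) ↔ (CValid φ ∨ CValid ψ) := by
  refine ⟨fun h => ?_, fun h M w => h.imp (· M w) (· M w)⟩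
  by_contra! hc
  simp only [CValid, not_forall] at hc
  obtain ⟨⟨M₁, w₁, h₁⟩, ⟨M₂, w₂, h₂⟩⟩ := hc
  rcases h (M₁.rootedSum M₂) none with hφ | hψ
  · refine h₁ (((CNModel.rootedSum.inl M₁ M₂).sat_iff φ true w₁).1 ?_)
    exact (M₁.rootedSum M₂).sat_mono φ true (CNModel.rootedSum.root_le M₁ M₂ _) hφ
  · refine h₂ (((CNModel.rootedSum.inr M₁ M₂).sat_iff ψ true w₂).1 ?_)
    exact (M₁.rootedSum M₂).sat_mono ψ true (CNModel.rootedSum.root_le M₁ M₂ _) hψ
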